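/- Let f : ℝ^n → ℝ be differentiable with inf_z f(z) = 0, and let V : ℝ^n → [0, ∞) vanish at 0 with f being V-smooth. Let 0 < λ' < λ and ε ≥ 0, and suppose β ∈ ℝ^p is an ε-solution for λ and β' ∈ ℝ^p is an ε-solution for λ', with P_λ(β) and P_{λ'}(β') finite. Then V*(−∇f(Xβ')) ≤ f(Xβ) + ((λ + λ')/(λ − λ'))·ε, where V*(u) = sup_{w ∈ ℝ^n} (⟨u, w⟩ − V(w)). -/

import Mathlib

open scoped RealInnerProductSpace

noncomputable section

abbrev Vec (d : ℕ) := EuclideanSpace ℝ (Fin d)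

/-- Matrix–vector product, landing in Euclidean space. -/
def mv {a b : ℕ} (M : Matrix (Fin a) (Fin b) ℝ) (v : Vec b) : Vec a := WithLp.toLp 2 (M.mulVec v)

/-- Fenchel conjugate of a real-valued function, with values in `EReal`. -/
noncomputable def rconj {d : ℕ} (f : Vec d → ℝ) (u : Vec d) : EReal :=
  ⨆ x, ((⟪u, x⟫ - f x : ℝ) : EReal)

/-- Primal objective `P_λ(β) = f(Xβ) + λ Ω(β)`, with values in `EReal`. -/
noncomputable def Pfun {n p : ℕ} (X : Matrix (Fin n) (Fin p) ℝ)
    (f : Vec n → ℝ) (Ω : Vec p → EReal) (lam : ℝ) (b : Vec p) : EReal :=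
  ((f (mv X b) : ℝ) : EReal) + ((lam : ℝ) : EReal) * Ω b

/-- `β` is an `ε`-solution for `λ`: `P_λ(β) - inf P_λ ≤ ε`. -/
noncomputable def epsSolution {n p : ℕ} (X : Matrix (Fin n) (Fin p) ℝ)
    (f : Vec n → ℝ) (Ω : Vec p → EReal) (lam ε : ℝ) (β : Vec p) : Prop :=
  Pfun X f Ω lam β - (⨅ b, Pfun X f Ω lam b) ≤ (ε : EReal)

/-! Writing `t = Ω β`, `t' = Ω β'`, the two ε-optimality conditions compared against each other read
`f(Xβ) + λ t ≤ ε + f(Xβ') + λ t'` and `f(Xβ') + λ' t' ≤ ε + f(Xβ) + λ' t`; weighting them by `λ'` and `λ`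
and adding eliminates `t, t'` and bounds `f(Xβ')` by `f(Xβ) + (λ + λ')/(λ - λ') ε`. On the other hand
`V`-smoothness at `x = Xβ'` gives `-⟪∇f(x), w⟫ - V(w) ≤ f(x) - f(x + w) ≤ f(x)` since `f ≥ 0`, so
`V*(-∇f(x)) ≤ f(x)`. -/

theorem rconj_neg_le_of_smooth {d : ℕ} {f V : Vec d → ℝ} {g x : Vec d} {m : ℝ}
    (hsm : ∀ z, f z - f x - ⟪g, z - x⟫ ≤ V (z - x)) (hm : ∀ z, m ≤ f z) :
    rconj V (-g) ≤ ((f x - m : ℝ) : EReal) := by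
  refine iSup_le fun w => EReal.coe_le_coe_iff.2 ?_
  have hw := hsm (x + w)
  rw [add_sub_cancel_left] at hw
  rw [inner_neg_left]
  linarith [hm (x + w)]

theorem le_add_div_mul_of_crossed_optimality {a a' t t' lam lam' ε : ℝ}
    (hlam' : 0 ≤ lam') (hll : lam' < lam)
    (h : a + lam * t ≤ ε + (a' + lam * t')) (h' : a' + lam' * t' ≤ ε + (a + lam' * t)) :
    a' ≤ a + (lam + lam') / (lam - lam') * ε := by
  have hd : 0 < lam - lam' := sub_pos.2 hll
  rw [div_mul_eq_mul_div, ← sub_le_iff_le_add', le_div_iff₀ hd]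
  nlinarith [mul_le_mul_of_nonneg_left h hlam', mul_le_mul_of_nonneg_left h' (hlam'.trans hll.le)]

section Pfun

variable {n p : ℕ} {X : Matrix (Fin n) (Fin p) ℝ} {f : Vec n → ℝ} {Ω : Vec p → EReal}

theorem Pfun_of_eq_coe {lam t : ℝ} {b : Vec p} (ht : Ω b = t) :
    Pfun X f Ω lam b = ((f (mv X b) + lam * t : ℝ) : EReal) := by
  rw [Pfun, ht, ← EReal.coe_mul, ← EReal.coe_add]

theorem exists_eq_coe_of_Pfun_eq_coe {lam r : ℝ} {b : Vec p} (hlam : 0 < lam)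
    (hr : Pfun X f Ω lam b = r) : ∃ t : ℝ, Ω b = t := by
  refine ⟨(Ω b).toReal, (EReal.coe_toReal (fun h => ?_) (fun h => ?_)).symm⟩
  · rw [Pfun, h, EReal.coe_mul_top_of_pos hlam, EReal.add_top_of_ne_bot (EReal.coe_ne_bot _)] at hr
    exact EReal.coe_ne_top r hr.symm
  · rw [Pfun, h, EReal.coe_mul_bot_of_pos hlam, EReal.add_bot] at hr
    exact EReal.coe_ne_bot r hr.symm

theorem epsSolution.le_add {lam ε : ℝ} {b : Vec p} (hb : epsSolution X f Ω lam ε b) (b' : Vec p) :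
    Pfun X f Ω lam b ≤ ε + Pfun X f Ω lam b' :=
  ((EReal.sub_le_iff_le_add (.inr (EReal.coe_ne_top ε)) (.inr (EReal.coe_ne_bot ε))).1 hb).trans
    (add_le_add_right (iInf_le _ b') _)

theorem epsSolution.le_add_of_eq_coe {lam ε t t' : ℝ} {b b' : Vec p}
    (hb : epsSolution X f Ω lam ε b) (ht : Ω b = t) (ht' : Ω b' = t') :
    f (mv X b) + lam * t ≤ ε + (f (mv X b') + lam * t') := by
  have h := hb.le_add b'
  rw [Pfun_of_eq_coe ht, Pfun_of_eq_coe ht'] at h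
  exact_mod_cast h

end Pfun

theorem stmt9_general {n p : ℕ} (X : Matrix (Fin n) (Fin p) ℝ)
    (f : Vec n → ℝ) (f' : Vec n → Vec n)
    (hinf : IsGLB (Set.range f) 0)
    (V : Vec n → ℝ)
    (hsm : ∀ x z : Vec n, f z - f x - ⟪f' x, z - x⟫ ≤ V (z - x))
    (Ω : Vec p → EReal)
    (lam lam' ε : ℝ) (hlam' : 0 < lam') (hll : lam' < lam)
    (β β' : Vec p)
    (hβ : epsSolution X f Ω lam ε β)
    (hβ' : epsSolution X f Ω lam' ε β')
    (hfin : ∃ r : ℝ, Pfun X f Ω lam β = (r : EReal))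
    (hfin' : ∃ r : ℝ, Pfun X f Ω lam' β' = (r : EReal)) :
    rconj V (-(f' (mv X β'))) ≤
      ((f (mv X β) + ((lam + lam') / (lam - lam')) * ε : ℝ) : EReal) := by
  obtain ⟨r, hr⟩ := hfin
  obtain ⟨r', hr'⟩ := hfin'
  obtain ⟨t, ht⟩ := exists_eq_coe_of_Pfun_eq_coe (hlam'.trans hll) hr
  obtain ⟨t', ht'⟩ := exists_eq_coe_of_Pfun_eq_coe hlam' hr'
  have hpath : f (mv X β') ≤ f (mv X β) + (lam + lam') / (lam - lam') * ε :=
    le_add_div_mul_of_crossed_optimality hlam'.le hll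
      (hβ.le_add_of_eq_coe ht ht') (hβ'.le_add_of_eq_coe ht' ht)
  calc rconj V (-(f' (mv X β'))) ≤ ((f (mv X β') - 0 : ℝ) : EReal) :=
        rconj_neg_le_of_smooth (hsm _) (fun z => hinf.1 ⟨z, rfl⟩)
    _ ≤ _ := EReal.coe_le_coe_iff.2 (by linarith)

/-- Lemma: bounding the gradient along the path.
`f` is differentiable with `inf f = 0` and `V`-smooth; `0 < λ' < λ`;
`β` is an `ε`-solution for `λ` and `β'` an `ε`-solution for `λ'`, with
`P_λ(β)` and `P_{λ'}(β')` finite.  Then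
`V*(-∇f(Xβ')) ≤ f(Xβ) + ((λ + λ')/(λ - λ')) ε`. -/
theorem stmt9 {n p : ℕ} (X : Matrix (Fin n) (Fin p) ℝ)
    (f : Vec n → ℝ) (f' : Vec n → Vec n)
    (hdiff : ∀ x, HasGradientAt f (f' x) x)
    (hconv : ConvexOn ℝ Set.univ f)
    (hinf : IsGLB (Set.range f) 0)
    (V : Vec n → ℝ) (hV0 : V 0 = 0) (hVnn : ∀ u, 0 ≤ V u)
    (hsm : ∀ x z : Vec n, f z - f x - ⟪f' x, z - x⟫ ≤ V (z - x))
    (Ω : Vec p → EReal)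
    (lam lam' ε : ℝ) (hlam' : 0 < lam') (hll : lam' < lam) (hε : 0 ≤ ε)
    (β β' : Vec p)
    (hβ : epsSolution X f Ω lam ε β)
    (hβ' : epsSolution X f Ω lam' ε β')
    (hfin : ∃ r : ℝ, Pfun X f Ω lam β = (r : EReal))
    (hfin' : ∃ r : ℝ, Pfun X f Ω lam' β' = (r : EReal)) :
    rconj V (-(f' (mv X β'))) ≤
      ((f (mv X β) + ((lam + lam') / (lam - lam')) * ε : ℝ) : EReal) :=
  stmt9_general X f f' hinf V hsm Ω lam lam' ε hlam' hll β β' hβ hβ' hfin hfin'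

end
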